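/- arXiv:1510.05774 — 4 statements merged into one kernel-verified Lean document; each statement's English description precedes it below -/
import Mathlib

section
/- Consider the arena A with V1 = {v_0}, V0 = {v_1}, initial vertex v_0, and edges (v_0, v_1) with weight −1, (v_1, v_1) with weight −1, and (v_1, v_0) labelled R. For every cap ∈ ℕ and every n with 1 ≤ n ≤ cap, the ultimately periodic play (v_0 v_1^n)^ω lies in Recharge(w, cap) and its long-run average recharge energy limsup_{k→∞} (1/k) Σ_{i=0}^{k−1} EL_cap(ρ_0⋯ρ_i) equals cap − n/2. In particular, for even cap, the play (v_0 v_1^cap)^ω lies in AvgRecharge(w, cap, cap/2), while for n < cap the play (v_0 v_1^n)^ω has long-run average cap − n/2 > cap/2. -/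
/-- An arena: a directed graph without terminal vertices, a set `V0` of Player 0's
vertices (Player 1 controls the complement), and an initial vertex. -/
structure Arena (V : Type) where
  V0 : Set V
  E : V → V → Prop
  vI : V
  succ : ∀ v, ∃ v', E v v'

/-- A play: an infinite path starting in the initial vertex. -/
def Arena.Play {V : Type} (A : Arena V) (ρ : ℕ → V) : Prop :=
  ρ 0 = A.vI ∧ ∀ n, A.E (ρ n) (ρ (n + 1))

/-- The play prefix `ρ 0 ⋯ ρ n` as a list. -/
def prefixList {V : Type} (ρ : ℕ → V) (n : ℕ) : List V :=
  (List.range (n + 1)).map ρ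

/-- A strategy for the player controlling the vertices in `p`. -/
def Arena.IsStrategy {V : Type} (A : Arena V) (p : Set V) (σ : List V → V) : Prop :=
  ∀ (h : List V) (v : V), v ∈ p → A.E v (σ (h ++ [v]))

/-- Consistency of a play with a strategy of the player controlling `p`. -/
def Arena.ConsistentWith {V : Type} (A : Arena V) (p : Set V) (σ : List V → V) (ρ : ℕ → V) : Prop :=
  ∀ n, ρ n ∈ p → ρ (n + 1) = σ (prefixList ρ n)

/-- `σ` is a winning strategy for the player controlling `p` with objective `Obj`. -/
def Arena.WinningStrategy {V : Type} (A : Arena V) (p : Set V) (Obj : Set (ℕ → V))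
    (σ : List V → V) : Prop :=
  A.IsStrategy p σ ∧ ∀ ρ, A.Play ρ → A.ConsistentWith p σ ρ → ρ ∈ Obj

/-- Player 0 wins the game `(A, Win)`. -/
def Arena.Player0Wins {V : Type} (A : Arena V) (Win : Set (ℕ → V)) : Prop :=
  ∃ σ, A.WinningStrategy A.V0 Win σ

/-- `h` is a finite play prefix consistent with the strategy `σ` of the player controlling `p`. -/
def Arena.FinPrefix {V : Type} (A : Arena V) (p : Set V) (σ : List V → V) (h : List V) : Prop :=
  ∃ ρ n, A.Play ρ ∧ A.ConsistentWith p σ ρ ∧ h = prefixList ρ n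

/-- A positional strategy only depends on the last vertex. -/
def Positional {X : Type} (σ : List X → X) : Prop :=
  ∀ (h : List X) (v : X), σ (h ++ [v]) = σ [v]

/-- The energy level of the play prefix `ρ 0 ⋯ ρ n` is `EL w ρ n`:
the sum of the weights of its `n` edges. -/
def EL {V : Type} (w : V → V → ℤ) (ρ : ℕ → V) (n : ℕ) : ℤ :=
  ∑ i ∈ Finset.range n, w (ρ i) (ρ (i + 1))

/-- The energy level of a finite play prefix given as a list. -/
def ELl {V : Type} (w : V → V → ℤ) : List V → ℤ
  | [] => 0
  | [_] => 0
  | a :: b :: l => w a b + ELl w (b :: l)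

/-- The average accumulated energy of the first `n` prefixes. -/
noncomputable def avgEL {V : Type} (w : V → V → ℤ) (ρ : ℕ → V) (n : ℕ) : ℝ :=
  (∑ i ∈ Finset.range n, (EL w ρ i : ℝ)) / (n : ℝ)

/-- The lower-bounded energy objective. -/
def EnergyL {V : Type} (w : V → V → ℤ) : Set (ℕ → V) :=
  {ρ | ∀ n, 0 ≤ EL w ρ n}

/-- The lower- and upper-bounded energy objective. -/
def EnergyLU {V : Type} (w : V → V → ℤ) (cap : ℕ) : Set (ℕ → V) :=
  {ρ | ∀ n, 0 ≤ EL w ρ n ∧ EL w ρ n ≤ (cap : ℤ)}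

/-- The average-energy objective: limsup of the averages is at most `t`. -/
def AvgE {V : Type} (w : V → V → ℤ) (t : ℝ) : Set (ℕ → V) :=
  {ρ | Filter.limsup (fun n => (avgEL w ρ n : EReal)) Filter.atTop ≤ (t : EReal)}

/-- The lower-bounded average-energy objective. -/
def AvgEnergyL {V : Type} (w : V → V → ℤ) (t : ℝ) : Set (ℕ → V) :=
  EnergyL w ∩ AvgE w t

/-- The mean-payoff objective. -/
def MP {V : Type} (w : V → V → ℤ) (t : ℝ) : Set (ℕ → V) :=
  {ρ | Filter.limsup (fun n => (((EL w ρ n : ℝ) / (n : ℝ)) : EReal)) Filter.atTop ≤ (t : EReal)}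

/-- A memory structure: initial memory state and update along edges. -/
structure Mem (V M : Type) where
  mI : M
  upd : M → V → V → M

/-- Tracking the memory state along a play. -/
def Mem.track {V M : Type} (mem : Mem V M) (ρ : ℕ → V) : ℕ → M
  | 0 => mem.mI
  | n + 1 => mem.upd (Mem.track mem ρ n) (ρ n) (ρ (n + 1))

def Mem.runAux {V M : Type} (mem : Mem V M) : M → List V → M
  | m, [] => m
  | m, [_] => m
  | m, a :: b :: l => Mem.runAux mem (mem.upd m a b) (b :: l)

/-- `Upd⁺`: the memory state reached along a finite play prefix. -/
def Mem.run {V M : Type} (mem : Mem V M) (h : List V) : M :=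
  Mem.runAux mem mem.mI h

/-- The strategy `σ` is implemented by the memory structure `mem`
(via some next-move function). -/
def Arena.ImplementedBy {V M : Type} (A : Arena V) (mem : Mem V M) (σ : List V → V) : Prop :=
  ∃ nxt : V → M → V, ∀ (h : List V) (v : V), σ (h ++ [v]) = nxt v (mem.run (h ++ [v]))

/-- `σ` is a finite-state strategy of size `k`. -/
def Arena.FiniteStateOfSize {V : Type} (A : Arena V) (k : ℕ) (σ : List V → V) : Prop :=
  ∃ (M : Type) (inst : Fintype M) (mem : Mem V M),
    @Fintype.card M inst = k ∧ A.ImplementedBy mem σ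

/-- The expanded arena `A × M`. -/
def Arena.expand {V M : Type} (A : Arena V) (mem : Mem V M) : Arena (V × M) where
  V0 := {p | p.1 ∈ A.V0}
  E := fun p q => A.E p.1 q.1 ∧ q.2 = mem.upd p.2 p.1 q.1
  vI := (A.vI, mem.mI)
  succ := fun p => by
    obtain ⟨v', h⟩ := A.succ p.1
    exact ⟨(v', mem.upd p.2 p.1 v'), h, rfl⟩

/-- The extended play in `A × M` corresponding to a play in `A`. -/
def extendPlay {V M : Type} (mem : Mem V M) (ρ : ℕ → V) : ℕ → V × M :=
  fun n => (ρ n, Mem.track mem ρ n)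

/-- `(A, Win) ≤_M (A × M, Win')`. -/
def Reduces {V M : Type} (A : Arena V) (mem : Mem V M) (Win : Set (ℕ → V))
    (Win' : Set (ℕ → V × M)) : Prop :=
  ∀ ρ, A.Play ρ → (ρ ∈ Win ↔ extendPlay mem ρ ∈ Win')

/-- A recharge weight function (`none` is the recharge label `R`) assigns
non-positive weights to all (non-recharge) edges. -/
def RechargeWeights {V : Type} (A : Arena V) (w : V → V → Option ℤ) : Prop :=
  ∀ u v, A.E u v → ∀ k : ℤ, w u v = some k → k ≤ 0

/-- The recharge energy level of the prefix `ρ 0 ⋯ ρ n`: the capacity plus the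
accumulated weight since the last `R`-edge. -/
def ELcap {V : Type} (w : V → V → Option ℤ) (cap : ℕ) (ρ : ℕ → V) : ℕ → ℤ
  | 0 => (cap : ℤ)
  | n + 1 =>
    match w (ρ n) (ρ (n + 1)) with
    | none => (cap : ℤ)
    | some k => ELcap w cap ρ n + k

/-- The recharge objective. -/
def Recharge {V : Type} (w : V → V → Option ℤ) (cap : ℕ) : Set (ℕ → V) :=
  {ρ | ∀ n, 0 ≤ ELcap w cap ρ n}

/-- The average of the recharge energy levels of the first `n` prefixes. -/
noncomputable def avgELcap {V : Type} (w : V → V → Option ℤ) (cap : ℕ) (ρ : ℕ → V)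
    (n : ℕ) : ℝ :=
  (∑ i ∈ Finset.range n, (ELcap w cap ρ i : ℝ)) / (n : ℝ)

/-- The average-bounded recharge objective. -/
def AvgRecharge {V : Type} (w : V → V → Option ℤ) (cap : ℕ) (t : ℝ) : Set (ℕ → V) :=
  {ρ | Filter.limsup (fun n => (avgELcap w cap ρ n : EReal)) Filter.atTop ≤ (t : EReal)} ∩
    Recharge w cap

/-- The (max-)parity objective: the maximal color occurring infinitely often is even. -/
def ParityObj {V : Type} (Ω : V → ℕ) : Set (ℕ → V) :=
  {ρ | ∃ c, Even c ∧ {n | Ω (ρ n) = c}.Infinite ∧ ∀ d, {n | Ω (ρ n) = d}.Infinite → d ≤ c}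

/-- The arena with Player 1's vertex `v₀ = 0`, Player 0's vertex `v₁ = 1`, initial
vertex `v₀`, and edges `(v₀,v₁)`, `(v₁,v₁)` and `(v₁,v₀)`. -/
def memTradeArena : Arena (Fin 2) where
  V0 := {1}
  E := fun u v => (u = 0 ∧ v = 1) ∨ u = 1
  vI := 0
  succ := fun u => ⟨1, by fin_cases u <;> simp⟩

/-- The recharge weight function: `(v₀,v₁)` and `(v₁,v₁)` have weight `-1`, and
`(v₁,v₀)` is labelled `R`. -/
def memTradeW : Fin 2 → Fin 2 → Option ℤ :=
  fun u v => if u = 1 ∧ v = 0 then none else some (-1)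

/-- The play `(v₀ v₁ⁿ)^ω`. -/
def memTradePlay (n : ℕ) : ℕ → Fin 2 :=
  fun k => if k % (n + 1) = 0 then 0 else 1

/-! Along `(v₀ v₁ⁿ)^ω` every `v₁`-step costs one unit and every return to `v₀` recharges, so the
recharge energy level after `k` steps is `cap - k % (n + 1)`. This sequence is `(n + 1)`-periodic,
hence its Cesàro averages converge to its mean over one period, `cap - n / 2`, and the limsup is
this limit. -/

open Filter Finset Topology

theorem Nat.add_one_mod_add_one_of_mod_ne {k m : ℕ} (h : k % (m + 1) ≠ m) :
    (k + 1) % (m + 1) = k % (m + 1) + 1 := by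
  have := Nat.mod_lt k (Nat.add_one_pos m)
  rw [← Nat.mod_add_mod, Nat.mod_eq_of_lt (by omega)]

theorem Function.Periodic.tendsto_sum_range_div {f : ℕ → ℝ} {p : ℕ} (hf : Function.Periodic f p)
    (hp : 0 < p) :
    Tendsto (fun k : ℕ => (∑ i ∈ range k, f i) / k) atTop (𝓝 ((∑ i ∈ range p, f i) / p)) := by
  set m := (∑ i ∈ range p, f i) / p
  set g : ℕ → ℝ := fun k => ∑ i ∈ range k, f i - k * m
  have hg : Function.Periodic g p := fun k => by
    have hpm : (p : ℝ) * m = ∑ i ∈ range p, f i := mul_div_cancel₀ _ (by positivity)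
    have hshift : ∑ i ∈ range k, f (p + i) = ∑ i ∈ range k, f i :=
      Finset.sum_congr rfl fun i _ => by rw [add_comm, hf]
    simp only [g, add_comm k p, Finset.sum_range_add, hshift]
    push_cast
    linear_combination -hpm
  set B := ∑ j ∈ range p, |g j|
  have hB : ∀ k, |g k| ≤ B := fun k => by
    rw [← hg.map_mod_nat k]
    exact Finset.single_le_sum (fun j _ => abs_nonneg (g j)) (Finset.mem_range.2 (Nat.mod_lt k hp))
  have hsmall : Tendsto (fun k : ℕ => g k / k) atTop (𝓝 0) :=
    squeeze_zero_norm (fun k => by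
      rw [Real.norm_eq_abs, abs_div, Nat.abs_cast]
      exact div_le_div_of_nonneg_right (hB k) k.cast_nonneg)
      (tendsto_const_div_atTop_nhds_zero_nat B)
  have hsplit : ∀ᶠ k : ℕ in atTop, m + g k / k = (∑ i ∈ range k, f i) / k := by
    filter_upwards [eventually_ne_atTop 0] with k hk
    field_simp
    ring
  simpa using (tendsto_const_nhds.add hsmall).congr' hsplit

theorem ELcap_succ_of_eq_none {V : Type} {w : V → V → Option ℤ} {cap : ℕ} {ρ : ℕ → V} {k : ℕ}
    (h : w (ρ k) (ρ (k + 1)) = none) : ELcap w cap ρ (k + 1) = cap := by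
  simp [ELcap, h]

theorem ELcap_succ_of_eq_some {V : Type} {w : V → V → Option ℤ} {cap : ℕ} {ρ : ℕ → V} {k : ℕ}
    {a : ℤ} (h : w (ρ k) (ρ (k + 1)) = some a) : ELcap w cap ρ (k + 1) = ELcap w cap ρ k + a := by
  simp [ELcap, h]

theorem memTradePlay_eq_zero_iff {n k : ℕ} : memTradePlay n k = 0 ↔ k % (n + 1) = 0 := by
  unfold memTradePlay; split_ifs <;> simp_all

theorem memTradePlay_eq_one_iff {n k : ℕ} : memTradePlay n k = 1 ↔ k % (n + 1) ≠ 0 := by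
  unfold memTradePlay; split_ifs <;> simp_all

theorem ELcap_memTradePlay (cap : ℕ) {n : ℕ} (hn : 1 ≤ n) (k : ℕ) :
    ELcap memTradeW cap (memTradePlay n) k = cap - (k % (n + 1) : ℕ) := by
  induction k with
  | zero => simp [ELcap]
  | succ k ih =>
    by_cases hk : k % (n + 1) = n
    · have hrecharge : memTradeW (memTradePlay n k) (memTradePlay n (k + 1)) = none := by
        rw [memTradePlay_eq_one_iff.2 (by omega),
          memTradePlay_eq_zero_iff.2 (Nat.succ_mod_succ_eq_zero_iff.2 hk)]
        rfl
      rw [ELcap_succ_of_eq_none hrecharge, Nat.succ_mod_succ_eq_zero_iff.2 hk]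
      simp
    · have hk' := Nat.add_one_mod_add_one_of_mod_ne hk
      have hstep : memTradeW (memTradePlay n k) (memTradePlay n (k + 1)) = some (-1) := by
        rw [memTradePlay_eq_one_iff.2 (show (k + 1) % (n + 1) ≠ 0 by omega)]
        simp [memTradeW]
      rw [ELcap_succ_of_eq_some hstep, ih, hk']
      push_cast
      ring

theorem memTradePlay_play {n : ℕ} (hn : 1 ≤ n) : memTradeArena.Play (memTradePlay n) := by
  refine ⟨memTradePlay_eq_zero_iff.2 (Nat.zero_mod _), fun k => ?_⟩
  by_cases hk : k % (n + 1) = 0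
  · have hk' := Nat.add_one_mod_add_one_of_mod_ne (hk.trans_ne (by omega))
    exact Or.inl ⟨memTradePlay_eq_zero_iff.2 hk, memTradePlay_eq_one_iff.2 (by omega)⟩
  · exact Or.inr (memTradePlay_eq_one_iff.2 hk)

theorem memTradePlay_mem_recharge {cap n : ℕ} (hn : 1 ≤ n) (hcap : n ≤ cap) :
    memTradePlay n ∈ Recharge memTradeW cap := fun k => by
  rw [ELcap_memTradePlay cap hn]
  have := Nat.mod_lt k (Nat.add_one_pos n)
  omega

theorem tendsto_avgELcap_memTradePlay (cap : ℕ) {n : ℕ} (hn : 1 ≤ n) :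
    Tendsto (avgELcap memTradeW cap (memTradePlay n)) atTop (𝓝 ((cap : ℝ) - n / 2)) := by
  have hperiodic : Function.Periodic (fun k => (ELcap memTradeW cap (memTradePlay n) k : ℝ))
      (n + 1) := fun k => by
    simp only [ELcap_memTradePlay cap hn, Nat.add_mod_right]
  have hmean : (∑ i ∈ range (n + 1), (ELcap memTradeW cap (memTradePlay n) i : ℝ)) / (n + 1 : ℕ)
      = (cap : ℝ) - n / 2 := by
    have hgauss : (∑ i ∈ range (n + 1), (i : ℝ)) * 2 = ((n : ℝ) + 1) * n := by
      have := Finset.sum_range_id_mul_two (n + 1)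
      rw [Nat.add_sub_cancel] at this
      simpa using congrArg (Nat.cast : ℕ → ℝ) this
    rw [Finset.sum_congr rfl fun i hi => by
      rw [ELcap_memTradePlay cap hn, Nat.mod_eq_of_lt (mem_range.1 hi)]]
    push_cast [Finset.sum_sub_distrib, Finset.sum_const, Finset.card_range, nsmul_eq_mul]
    field_simp
    linear_combination -hgauss
  rw [← hmean]
  exact hperiodic.tendsto_sum_range_div n.succ_pos

/-- For `1 ≤ n ≤ cap`, the play `(v₀ v₁ⁿ)^ω` lies in
`Recharge(w,cap)` and its long-run average recharge energy equals `cap - n/2`. In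
particular, for even `cap` the play `(v₀ v₁^cap)^ω` lies in
`AvgRecharge(w,cap,cap/2)`, while for `n < cap` the long-run average
`cap - n/2` exceeds `cap/2`. -/
theorem memTrade_play_average (cap n : ℕ) (h1 : 1 ≤ n) (h2 : n ≤ cap) :
    memTradeArena.Play (memTradePlay n) ∧
    memTradePlay n ∈ Recharge memTradeW cap ∧
    Filter.limsup (fun k => (avgELcap memTradeW cap (memTradePlay n) k : EReal))
      Filter.atTop = (((cap : ℝ) - (n : ℝ) / 2 : ℝ) : EReal) ∧
    (Even cap → n = cap →
      memTradePlay n ∈ AvgRecharge memTradeW cap ((cap : ℝ) / 2)) ∧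
    (n < cap → (cap : ℝ) / 2 < (cap : ℝ) - (n : ℝ) / 2) := by
  have hrecharge := memTradePlay_mem_recharge h1 h2
  have hlimsup : limsup (fun k => (avgELcap memTradeW cap (memTradePlay n) k : EReal)) atTop
      = (((cap : ℝ) - n / 2 : ℝ) : EReal) :=
    (EReal.tendsto_coe.2 (tendsto_avgELcap_memTradePlay cap h1)).limsup_eq
  refine ⟨memTradePlay_play h1, hrecharge, hlimsup, fun _ hn => ⟨?_, hrecharge⟩, fun hn => ?_⟩
  · subst hn
    rw [Set.mem_ofPred_eq, hlimsup, sub_half]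
  · have : (n : ℝ) < cap := by exact_mod_cast hn
    linarith
end

section
/- Let (A, w, c) be a countdown game with arena A = (V, V0, V1, E, v_I). Let A' be the arena obtained from A by adding a fresh vertex v_I' to V1 with a single outgoing edge (v_I', v_I) labelled R, with v_I' as the new initial vertex, and let w' extend w by labelling this new edge R. Then: (1) for every play ρ of A, ρ ∈ CNTDWN(w, c) if, and only if, the play v_I' · ρ of A' lies in AvgRecharge(w', c, 0); and (2) Player 0 wins (A', AvgRecharge(w', c, 0)) if, and only if, Player 0 wins (A, CNTDWN(w, c)). -/
/-- A countdown game: arena, weight function and sink vertex subject to the usual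
syntactic restrictions. -/
structure CountdownGame (V : Type) where
  A : Arena V
  w : V → V → ℤ
  sink : V
  hvI : A.vI ∈ A.V0
  hsinkP1 : sink ∉ A.V0
  hsinkLoop : ∀ v, A.E sink v ↔ v = sink
  hToSink : ∀ v ∈ A.V0, A.E v sink
  hEdgeShape : ∀ u v, A.E u v →
    (u = sink ∧ v = sink) ∨ (u ∈ A.V0 ∧ v = sink) ∨
      (u ∈ A.V0 ∧ v ∉ A.V0 ∧ v ≠ sink) ∨ (u ∉ A.V0 ∧ u ≠ sink ∧ v ∈ A.V0)
  hNeg : ∀ u v, A.E u v → u ∈ A.V0 → v ∉ A.V0 → v ≠ sink → w u v < 0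
  hDistinct : ∀ u ∈ A.V0, ∀ v v', A.E u v → A.E u v' → v ≠ v' → w u v ≠ w u v'
  hZero : ∀ u v, A.E u v → ¬(u ∈ A.V0 ∧ v ∉ A.V0 ∧ v ≠ sink) → w u v = 0

/-- The countdown objective: reach the sink with `c + EL = 0`. -/
def CNTDWN {V : Type} (w : V → V → ℤ) (sink : V) (c : ℕ) : Set (ℕ → V) :=
  {ρ | ∃ n, ρ n = sink ∧ (c : ℤ) + EL w ρ n = 0}

/-- The arena `A'` obtained by adding a fresh initial vertex (`none`), belonging to
Player 1, with a single edge to the old initial vertex. -/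
def cdArena {V : Type} (C : CountdownGame V) : Arena (Option V) where
  V0 := {p | ∃ v ∈ C.A.V0, p = some v}
  E := fun p q =>
    match p, q with
    | none, some v => v = C.A.vI
    | some u, some v => C.A.E u v
    | _, _ => False
  vI := none
  succ := by
    intro p
    match p with
    | none => exact ⟨some C.A.vI, rfl⟩
    | some u =>
      obtain ⟨v, hv⟩ := C.A.succ u
      exact ⟨some v, hv⟩

/-- The recharge weight function `w'` extending `w`: the new edge is labelled `R`. -/
def cdWeight {V : Type} (C : CountdownGame V) : Option V → Option V → Option ℤ :=
  fun p q =>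
    match p, q with
    | none, some _ => none
    | some u, some v => some (C.w u v)
    | _, _ => some 0

/-- The play `v_I' · ρ` of `A'` obtained by prepending the fresh initial vertex. -/
def cdPlay {V : Type} (ρ : ℕ → V) : ℕ → Option V :=
  fun n => match n with
  | 0 => none
  | k + 1 => some (ρ k)

/-!
Along a play `v_I' · ρ` the recharge energy after the first step is `c + EL ρ`, which is
non-increasing since all countdown weights are non-positive. Under the recharge constraint it
is bounded below by `0`, so it is eventually constant and its Cesàro averages converge to the
final value; the average bound `0` then forces that value to be `0`. From then on all weights
vanish, and since a zero-weight edge avoiding the sink leads from Player 1 to Player 0, two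
consecutive ones force a visit to the sink. Strategies transfer between `A` and `A'` by
dropping or adding the fresh initial vertex.
-/

open Filter Topology

theorem EL_succ {V : Type} (w : V → V → ℤ) (ρ : ℕ → V) (n : ℕ) :
    EL w ρ (n + 1) = EL w ρ n + w (ρ n) (ρ (n + 1)) :=
  Finset.sum_range_succ _ _

theorem prefixList_eq_append {V : Type} (ρ : ℕ → V) (n : ℕ) :
    prefixList ρ n = (List.range n).map ρ ++ [ρ n] := by
  simp [prefixList, List.range_succ]

theorem Int.exists_forall_ge_eq_of_antitone {f : ℕ → ℤ} (hf : Antitone f) {b : ℤ}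
    (hb : ∀ n, b ≤ f n) : ∃ N, ∀ m, N ≤ m → f m = f N := by
  obtain ⟨_, ⟨N, rfl⟩, hmin⟩ := Int.exists_least_of_bdd (P := (· ∈ Set.range f))
    ⟨b, by rintro _ ⟨n, rfl⟩; exact hb n⟩ ⟨f 0, 0, rfl⟩
  exact ⟨N, fun m hm => le_antisymm (hf hm) (hmin _ ⟨m, rfl⟩)⟩

theorem limsup_avgELcap_eq {V : Type} {w : V → V → Option ℤ} {cap : ℕ} {ρ : ℕ → V} {a : ℝ}
    (h : ∀ᶠ n in atTop, (ELcap w cap ρ n : ℝ) = a) :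
    limsup (fun n => (avgELcap w cap ρ n : EReal)) atTop = a := by
  have hconv : Tendsto (fun n => avgELcap w cap ρ n) atTop (𝓝 a) := by
    simpa only [avgELcap, div_eq_inv_mul] using
      (tendsto_const_nhds.congr' (h.mono fun _ => Eq.symm)).cesaro
  exact ((continuous_coe_real_ereal.tendsto a).comp hconv).limsup_eq

namespace CountdownGame

variable {V : Type} (C : CountdownGame V) {ρ : ℕ → V}

theorem w_nonpos {u v : V} (h : C.A.E u v) : C.w u v ≤ 0 := by
  by_cases hc : u ∈ C.A.V0 ∧ v ∉ C.A.V0 ∧ v ≠ C.sink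
  · exact (C.hNeg u v h hc.1 hc.2.1 hc.2.2).le
  · exact (C.hZero u v h hc).le

theorem eq_sink_or_of_w_eq_zero {u v : V} (h : C.A.E u v) (h0 : C.w u v = 0) :
    u = C.sink ∨ v = C.sink ∨ (u ∉ C.A.V0 ∧ v ∈ C.A.V0) := by
  rcases C.hEdgeShape u v h with ⟨hu, -⟩ | ⟨-, hv⟩ | ⟨hu, hv, hs⟩ | ⟨hu, -, hv⟩
  · exact Or.inl hu
  · exact Or.inr (Or.inl hv)
  · exact absurd h0 (C.hNeg u v h hu hv hs).ne
  · exact Or.inr (Or.inr ⟨hu, hv⟩)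

theorem w_sink_sink : C.w C.sink C.sink = 0 :=
  C.hZero _ _ ((C.hsinkLoop _).mpr rfl) fun h => C.hsinkP1 h.1

variable {C}

theorem antitone_EL (hρ : C.A.Play ρ) : Antitone (EL C.w ρ) :=
  antitone_nat_of_succ_le fun n => by
    rw [EL_succ]
    linarith [C.w_nonpos (hρ.2 n)]

theorem eq_sink_of_le (hρ : C.A.Play ρ) {n m : ℕ} (hn : ρ n = C.sink) (hnm : n ≤ m) :
    ρ m = C.sink := by
  induction m, hnm using Nat.le_induction with
  | base => exact hn
  | succ m _ ih => exact (C.hsinkLoop _).mp (ih ▸ hρ.2 m)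

theorem EL_eq_of_sink (hρ : C.A.Play ρ) {n m : ℕ} (hn : ρ n = C.sink) (hnm : n ≤ m) :
    EL C.w ρ m = EL C.w ρ n := by
  induction m, hnm using Nat.le_induction with
  | base => rfl
  | succ m hnm ih =>
    rw [EL_succ, ih, eq_sink_of_le hρ hn hnm, eq_sink_of_le hρ hn (hnm.trans m.le_succ),
      C.w_sink_sink, add_zero]

/-- Zero-weight edges avoiding the sink go from Player 1 to Player 0, so two of them cannot
follow each other. -/
theorem exists_sink_of_w_eq_zero (hρ : C.A.Play ρ) {N : ℕ}
    (h0 : ∀ m, N ≤ m → C.w (ρ m) (ρ (m + 1)) = 0) : ∃ m, N ≤ m ∧ ρ m = C.sink := by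
  rcases C.eq_sink_or_of_w_eq_zero (hρ.2 N) (h0 N le_rfl) with h | h | ⟨-, hV0⟩
  · exact ⟨N, le_rfl, h⟩
  · exact ⟨N + 1, N.le_succ, h⟩
  rcases C.eq_sink_or_of_w_eq_zero (hρ.2 (N + 1)) (h0 (N + 1) N.le_succ) with h | h | ⟨hV1, -⟩
  · exact ⟨N + 1, N.le_succ, h⟩
  · exact ⟨N + 2, by omega, h⟩
  · exact absurd hV0 hV1

end CountdownGame

section Reduction

variable {V : Type} {C : CountdownGame V} {ρ : ℕ → V}

theorem ELcap_cdPlay_succ (c : ℕ) (ρ : ℕ → V) (n : ℕ) :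
    ELcap (cdWeight C) c (cdPlay ρ) (n + 1) = c + EL C.w ρ n := by
  induction n with
  | zero => simp [ELcap, cdWeight, cdPlay, EL]
  | succ n ih =>
    change ELcap (cdWeight C) c (cdPlay ρ) (n + 1) + C.w (ρ n) (ρ (n + 1)) = _
    rw [ih, EL_succ, add_assoc]

theorem mem_CNTDWN_iff_cdPlay_mem_AvgRecharge (c : ℕ) (hρ : C.A.Play ρ) :
    ρ ∈ CNTDWN C.w C.sink c ↔ cdPlay ρ ∈ AvgRecharge (cdWeight C) c 0 := by
  constructor
  · rintro ⟨n, hsink, hEL⟩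
    have hmin : ∀ m, EL C.w ρ n ≤ EL C.w ρ m := fun m =>
      (le_total m n).elim (fun h => CountdownGame.antitone_EL hρ h)
        (fun h => (CountdownGame.EL_eq_of_sink hρ hsink h).ge)
    refine ⟨(limsup_avgELcap_eq (a := 0) ?_).le, ?_⟩
    · filter_upwards [eventually_gt_atTop n] with m hm
      obtain ⟨k, rfl⟩ := Nat.exists_eq_add_one_of_ne_zero (by omega : m ≠ 0)
      rw [ELcap_cdPlay_succ, CountdownGame.EL_eq_of_sink hρ hsink (by omega)]
      exact_mod_cast hEL
    · rintro (_ | k)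
      · exact Int.natCast_nonneg c
      · rw [ELcap_cdPlay_succ]
        linarith [hmin k]
  · rintro ⟨havg, hrec⟩
    have hbdd : ∀ k, -(c : ℤ) ≤ EL C.w ρ k := fun k => by
      linarith [ELcap_cdPlay_succ (C := C) c ρ k ▸ hrec (k + 1)]
    obtain ⟨N, hN⟩ := Int.exists_forall_ge_eq_of_antitone (CountdownGame.antitone_EL hρ) hbdd
    have hlim : limsup (fun n => (avgELcap (cdWeight C) c (cdPlay ρ) n : EReal)) atTop =
        ((c + EL C.w ρ N : ℤ) : ℝ) := by
      refine limsup_avgELcap_eq ?_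
      filter_upwards [eventually_gt_atTop N] with m hm
      obtain ⟨k, rfl⟩ := Nat.exists_eq_add_one_of_ne_zero (by omega : m ≠ 0)
      rw [ELcap_cdPlay_succ, hN k (by omega)]
    have hEL : (c : ℤ) + EL C.w ρ N = 0 := by
      refine le_antisymm ?_ (ELcap_cdPlay_succ (C := C) c ρ N ▸ hrec (N + 1))
      have hle : limsup (fun n => (avgELcap (cdWeight C) c (cdPlay ρ) n : EReal)) atTop ≤
          ((0 : ℝ) : EReal) := havg
      rw [hlim] at hle
      exact_mod_cast EReal.coe_le_coe_iff.mp hle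
    obtain ⟨m, hm, hsink⟩ := CountdownGame.exists_sink_of_w_eq_zero hρ fun m hm => by
      linarith [EL_succ C.w ρ m, hN m hm, hN (m + 1) (by omega)]
    exact ⟨m, hsink, by rw [hN m hm, hEL]⟩

end Reduction

section Strategies

variable {V : Type} {C : CountdownGame V}

@[simp]
theorem some_mem_cdArena_V0 {v : V} : some v ∈ (cdArena C).V0 ↔ v ∈ C.A.V0 := by
  simp [cdArena]

@[simp]
theorem none_notMem_cdArena_V0 : none ∉ (cdArena C).V0 := by
  simp [cdArena]

theorem exists_eq_some_of_cdArena_E {p q : Option V} (h : (cdArena C).E p q) :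
    ∃ v, q = some v := by
  cases p <;> cases q <;> simp_all [cdArena]

theorem cdArena_play_cdPlay_iff {ρ : ℕ → V} : (cdArena C).Play (cdPlay ρ) ↔ C.A.Play ρ :=
  ⟨fun h => ⟨h.2 0, fun n => h.2 (n + 1)⟩,
    fun h => ⟨rfl, fun | 0 => h.1 | n + 1 => h.2 n⟩⟩

theorem exists_eq_cdPlay {ρ' : ℕ → Option V} (h : (cdArena C).Play ρ') :
    ∃ ρ, ρ' = cdPlay ρ := by
  choose ρ hρ using fun n => exists_eq_some_of_cdArena_E (h.2 n)
  exact ⟨ρ, funext fun | 0 => h.1 | n + 1 => hρ n⟩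

theorem prefixList_cdPlay_succ (ρ : ℕ → V) (n : ℕ) :
    prefixList (cdPlay ρ) (n + 1) = none :: (prefixList ρ n).map some := by
  simp [prefixList, List.range_succ_eq_map, cdPlay, Function.comp_def]

def liftStrategy (σ : List V → V) (l : List (Option V)) : Option V :=
  some (σ (l.filterMap id))

variable (C) in
/-- The default `C.A.vI` is never used: a strategy of `A'` only moves to vertices `some v`. -/
def restrictStrategy (σ' : List (Option V) → Option V) (l : List V) : V :=
  (σ' (none :: l.map some)).getD C.A.vI

theorem isStrategy_liftStrategy {σ : List V → V} (hσ : C.A.IsStrategy C.A.V0 σ) :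
    (cdArena C).IsStrategy (cdArena C).V0 (liftStrategy σ) := by
  rintro h _ ⟨v, hv, rfl⟩
  change C.A.E v (σ ((h ++ [some v]).filterMap id))
  simpa using hσ (h.filterMap id) v hv

theorem consistentWith_of_liftStrategy {σ : List V → V} {ρ : ℕ → V}
    (h : (cdArena C).ConsistentWith (cdArena C).V0 (liftStrategy σ) (cdPlay ρ)) :
    C.A.ConsistentWith C.A.V0 σ ρ := by
  intro n hn
  have := h (n + 1) (some_mem_cdArena_V0.2 hn)
  rw [prefixList_cdPlay_succ] at this
  simpa [liftStrategy, cdPlay] using this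

theorem restrictStrategy_spec {σ' : List (Option V) → Option V}
    (hσ' : (cdArena C).IsStrategy (cdArena C).V0 σ') (l : List V) {v : V} (hv : v ∈ C.A.V0) :
    σ' (none :: (l ++ [v]).map some) = some (restrictStrategy C σ' (l ++ [v])) ∧
      C.A.E v (restrictStrategy C σ' (l ++ [v])) := by
  have hE := hσ' (none :: l.map some) (some v) (some_mem_cdArena_V0.2 hv)
  rw [List.cons_append, ← List.map_singleton (f := some), ← List.map_append] at hE
  obtain ⟨u, hu⟩ := exists_eq_some_of_cdArena_E hE
  rw [hu] at hE
  unfold restrictStrategy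
  rw [hu]
  exact ⟨rfl, hE⟩

theorem isStrategy_restrictStrategy {σ' : List (Option V) → Option V}
    (hσ' : (cdArena C).IsStrategy (cdArena C).V0 σ') :
    C.A.IsStrategy C.A.V0 (restrictStrategy C σ') :=
  fun l _ hv => (restrictStrategy_spec hσ' l hv).2

theorem consistentWith_of_restrictStrategy {σ' : List (Option V) → Option V}
    (hσ' : (cdArena C).IsStrategy (cdArena C).V0 σ') {ρ : ℕ → V}
    (h : C.A.ConsistentWith C.A.V0 (restrictStrategy C σ') ρ) :
    (cdArena C).ConsistentWith (cdArena C).V0 σ' (cdPlay ρ) := by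
  rintro (_ | n) hn
  · exact absurd hn none_notMem_cdArena_V0
  have hn' : ρ n ∈ C.A.V0 := some_mem_cdArena_V0.1 hn
  rw [prefixList_cdPlay_succ, prefixList_eq_append,
    (restrictStrategy_spec hσ' _ hn').1, ← prefixList_eq_append, ← h n hn']
  rfl

theorem cdArena_player0Wins_iff {Win : Set (ℕ → V)} {Win' : Set (ℕ → Option V)}
    (hWin : ∀ ρ, C.A.Play ρ → (ρ ∈ Win ↔ cdPlay ρ ∈ Win')) :
    (cdArena C).Player0Wins Win' ↔ C.A.Player0Wins Win := by
  constructor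
  · rintro ⟨σ', hσ', hwin⟩
    refine ⟨restrictStrategy C σ', isStrategy_restrictStrategy hσ', fun ρ hρ hcons => ?_⟩
    exact (hWin ρ hρ).2 <| hwin _ (cdArena_play_cdPlay_iff.2 hρ)
      (consistentWith_of_restrictStrategy hσ' hcons)
  · rintro ⟨σ, hσ, hwin⟩
    refine ⟨liftStrategy σ, isStrategy_liftStrategy hσ, fun ρ' hρ' hcons => ?_⟩
    obtain ⟨ρ, rfl⟩ := exists_eq_cdPlay hρ'
    have hρ := cdArena_play_cdPlay_iff.1 hρ'
    exact (hWin ρ hρ).1 (hwin ρ hρ (consistentWith_of_liftStrategy hcons))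

end Strategies

theorem countdown_to_avgRecharge_general {V : Type} (C : CountdownGame V) (c : ℕ) :
    (∀ ρ : ℕ → V, C.A.Play ρ →
      (ρ ∈ CNTDWN C.w C.sink c ↔ cdPlay ρ ∈ AvgRecharge (cdWeight C) c (0 : ℝ))) ∧
    ((cdArena C).Player0Wins (AvgRecharge (cdWeight C) c (0 : ℝ)) ↔
      C.A.Player0Wins (CNTDWN C.w C.sink c)) := by
  have hplays := fun ρ (hρ : C.A.Play ρ) => mem_CNTDWN_iff_cdPlay_mem_AvgRecharge c hρ
  exact ⟨hplays, cdArena_player0Wins_iff hplays⟩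

/-- (1) A play `ρ` of the countdown game is in `CNTDWN(w,c)` iff
`v_I' · ρ ∈ AvgRecharge(w',c,0)`; (2) Player 0 wins `(A', AvgRecharge(w',c,0))` iff
Player 0 wins `(A, CNTDWN(w,c))`. -/
theorem countdown_to_avgRecharge {V : Type} [Fintype V] (C : CountdownGame V) (c : ℕ) :
    (∀ ρ : ℕ → V, C.A.Play ρ →
      (ρ ∈ CNTDWN C.w C.sink c ↔ cdPlay ρ ∈ AvgRecharge (cdWeight C) c (0 : ℝ))) ∧
    ((cdArena C).Player0Wins (AvgRecharge (cdWeight C) c (0 : ℝ)) ↔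
      C.A.Player0Wins (CNTDWN C.w C.sink c)) :=
  countdown_to_avgRecharge_general C c
end

section
/- Let A be an arena with n vertices and recharge weight function w whose weights lie in {−W, …, 0} ∪ {R}. Every finite path v_0 v_1 ⋯ v_m in A that traverses no R-labelled edge and satisfies EL(v_0⋯v_m) < −(n−1)·W contains positions j < j' such that v_j = v_{j'} and EL(v_j ⋯ v_{j'}) < 0, i.e., it contains a cycle of strictly negative weight without R-edges. -/
/-! Along a path whose edge weights are at least `-W` and whose cycles all have non-negative
weight, the energy level never drops below `-(d - 1)·W`, where `d` is the number of distinct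
vertices visited so far: an edge to a fresh vertex costs at most `W` and adds one to `d`, while
an edge closing a cycle returns to a position of no higher energy. Hence a path of energy
below `-(n - 1)·W` must close a negative cycle. -/

open Finset

theorem sum_range_ge_neg_card_visited_mul {V : Type} [DecidableEq V] (ρ : ℕ → V) (f : ℕ → ℤ)
    (W : ℕ) (m : ℕ) (hf : ∀ i < m, -(W : ℤ) ≤ f i)
    (hcycle : ∀ j j', j < j' → j' ≤ m → ρ j = ρ j' → 0 ≤ ∑ i ∈ Ico j j', f i) :
    ∀ k ≤ m, -((#((range (k + 1)).image ρ) : ℤ) - 1) * W ≤ ∑ i ∈ range k, f i := by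
  intro k
  induction k using Nat.strong_induction_on with
  | _ k ih =>
    intro hk
    rcases k with _ | k
    · simp
    have hvisited : (range (k + 2)).image ρ = insert (ρ (k + 1)) ((range (k + 1)).image ρ) := by
      rw [range_add_one, image_insert]
    by_cases hrevisit : ρ (k + 1) ∈ (range (k + 1)).image ρ
    · obtain ⟨j, hj, hρj⟩ := mem_image.mp hrevisit
      have hjk : j ≤ k := Nat.lt_succ_iff.mp (mem_range.mp hj)
      have hcard : #((range (j + 1)).image ρ) ≤ #((range (k + 2)).image ρ) :=
        card_le_card (image_subset_image (range_subset_range.mpr (by omega)))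
      calc -((#((range (k + 2)).image ρ) : ℤ) - 1) * W
          ≤ -((#((range (j + 1)).image ρ) : ℤ) - 1) * W := by gcongr
        _ ≤ ∑ i ∈ range j, f i := ih j (by omega) (by omega)
        _ ≤ ∑ i ∈ range j, f i + ∑ i ∈ Ico j (k + 1), f i :=
          le_add_of_nonneg_right (hcycle j (k + 1) (by omega) hk hρj)
        _ = ∑ i ∈ range (k + 1), f i := sum_range_add_sum_Ico f (by omega)
    · rw [hvisited, card_insert_of_notMem hrevisit, sum_range_succ]
      have hprev := ih k (by omega) (by omega)
      have hedge := hf k (by omega)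
      push_cast
      linarith

/-- In an arena with `n` vertices and weights in `{-W,…,0} ∪ {R}`,
every finite path without `R`-edges whose energy level is below `-(n-1)·W` contains a
cycle of strictly negative weight. -/
theorem negative_cycle_of_low_energy {V : Type} [Fintype V] (A : Arena V)
    (w : V → V → Option ℤ) (W : ℕ)
    (hw : ∀ u v, A.E u v → ∀ k : ℤ, w u v = some k → -(W : ℤ) ≤ k ∧ k ≤ 0)
    (ρ : ℕ → V) (m : ℕ)
    (hpath : ∀ i < m, A.E (ρ i) (ρ (i + 1)))
    (hnoR : ∀ i < m, w (ρ i) (ρ (i + 1)) ≠ none)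
    (hEL : (∑ i ∈ Finset.range m, (w (ρ i) (ρ (i + 1))).getD 0) <
      -(((Fintype.card V - 1) * W : ℕ) : ℤ)) :
    ∃ j j', j < j' ∧ j' ≤ m ∧ ρ j = ρ j' ∧
      (∑ i ∈ Finset.Ico j j', (w (ρ i) (ρ (i + 1))).getD 0) < 0 := by
  classical
  by_contra! hcycle
  have hweight : ∀ i < m, -(W : ℤ) ≤ (w (ρ i) (ρ (i + 1))).getD 0 := by
    intro i hi
    obtain ⟨k, hk⟩ := Option.ne_none_iff_exists'.mp (hnoR i hi)
    rw [hk]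
    exact (hw _ _ (hpath i hi) k hk).1
  have hlow := sum_range_ge_neg_card_visited_mul ρ _ W m hweight hcycle m le_rfl
  have hvisited : #((range (m + 1)).image ρ) ≤ Fintype.card V := card_le_univ _
  have hV : 1 ≤ Fintype.card V := Fintype.card_pos_iff.mpr ⟨ρ 0⟩
  have hbound :
      -(((Fintype.card V : ℤ) - 1) * W) ≤ -((#((range (m + 1)).image ρ) : ℤ) - 1) * W := by
    rw [neg_mul]; gcongr
  push_cast [Nat.cast_sub hV] at hEL
  linarith
end

section
/- Let A be an arena with recharge weight function w such that every vertex is of exactly one of three types: a recharge-vertex (all incoming edges labelled R), a zero-vertex (all incoming edges have weight 0), or a decrement-vertex (all incoming edges have strictly negative weight), and let Ω color recharge-vertices 2, decrement-vertices 1, and zero-vertices 0. If σ is a winning strategy for Player 0 in (A, Recharge(w, cap)) for some cap ∈ ℕ, then σ is a winning strategy for Player 0 in the parity game (A, Parity(Ω)). -/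
/-- Every vertex is of exactly one of three types, and `Ω` colors recharge-vertices
`2`, decrement-vertices `1` and zero-vertices `0`. -/
def ColoredRecharge {V : Type} (A : Arena V) (w : V → V → Option ℤ) (Ω : V → ℕ) : Prop :=
  ∀ v : V,
    (Ω v = 2 ∧ ∀ u, A.E u v → w u v = none) ∨
    (Ω v = 1 ∧ ∀ u, A.E u v → ∃ k : ℤ, w u v = some k ∧ k < 0) ∨
    (Ω v = 0 ∧ ∀ u, A.E u v → w u v = some 0)

/-!
Along a play that respects the recharge objective, consider the suffix after the last
recharge-vertex (if recharge-vertices occur infinitely often, colour 2 wins at once). On that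
suffix the recharge energy level never increases and drops by at least one at each
decrement-vertex; since it stays non-negative, decrement-vertices occur only finitely often,
so colour 0 is the maximal colour seen infinitely often.
-/

theorem finite_setOf_lt_of_antitoneOn {f : ℕ → ℤ} {N : ℕ} {b : ℤ}
    (hf : AntitoneOn f (Set.Ici N)) (hb : ∀ n, b ≤ f n) :
    {n | N ≤ n ∧ f (n + 1) < f n}.Finite := by
  by_contra hinf
  have hdrop : ∀ j : ℕ, ∃ n, N ≤ n ∧ f n + j ≤ f N := by
    intro j
    induction j with
    | zero => exact ⟨N, le_rfl, by simp⟩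
    | succ j ih =>
      obtain ⟨n, hNn, hn⟩ := ih
      obtain ⟨m, ⟨hNm, hm⟩, hnm⟩ := Set.Infinite.exists_gt hinf n
      have hmn : f m ≤ f n := hf (Set.mem_Ici.mpr hNn) (Set.mem_Ici.mpr hNm) hnm.le
      exact ⟨m + 1, by omega, by push_cast; omega⟩
  obtain ⟨n, -, hn⟩ := hdrop ((f N - b).toNat + 1)
  have := hb n
  omega

theorem mem_parityObj_of_infinite {V : Type} {Ω : V → ℕ} {ρ : ℕ → V} {c : ℕ} (hc : Even c)
    (hinf : {n | Ω (ρ n) = c}.Infinite)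
    (hfin : ∀ d, c < d → {n | Ω (ρ n) = d}.Finite) :
    ρ ∈ ParityObj Ω :=
  ⟨c, hc, hinf, fun d hd => not_lt.mp fun hcd => hd (hfin d hcd)⟩

theorem ELcap_succ_of_some {V : Type} {w : V → V → Option ℤ} {cap : ℕ} {ρ : ℕ → V}
    {n : ℕ} {k : ℤ} (hk : w (ρ n) (ρ (n + 1)) = some k) :
    ELcap w cap ρ (n + 1) = ELcap w cap ρ n + k := by
  simp [ELcap, hk]

namespace ColoredRecharge

variable {V : Type} {A : Arena V} {w : V → V → Option ℤ} {Ω : V → ℕ} {cap : ℕ} {ρ : ℕ → V}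

theorem color_le_two (hc : ColoredRecharge A w Ω) (v : V) : Ω v ≤ 2 := by
  rcases hc v with ⟨h, -⟩ | ⟨h, -⟩ | ⟨h, -⟩ <;> omega

theorem ELcap_succ_le (hc : ColoredRecharge A w Ω) {n : ℕ} (hE : A.E (ρ n) (ρ (n + 1)))
    (h2 : Ω (ρ (n + 1)) ≠ 2) : ELcap w cap ρ (n + 1) ≤ ELcap w cap ρ n := by
  rcases hc (ρ (n + 1)) with ⟨h, -⟩ | ⟨-, hw⟩ | ⟨-, hw⟩
  · exact absurd h h2
  · obtain ⟨k, hk, hneg⟩ := hw _ hE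
    rw [ELcap_succ_of_some hk]
    omega
  · rw [ELcap_succ_of_some (hw _ hE), add_zero]

theorem ELcap_succ_lt (hc : ColoredRecharge A w Ω) {n : ℕ} (hE : A.E (ρ n) (ρ (n + 1)))
    (h1 : Ω (ρ (n + 1)) = 1) : ELcap w cap ρ (n + 1) < ELcap w cap ρ n := by
  rcases hc (ρ (n + 1)) with ⟨h, -⟩ | ⟨-, hw⟩ | ⟨h, -⟩
  · omega
  · obtain ⟨k, hk, hneg⟩ := hw _ hE
    rw [ELcap_succ_of_some hk]
    omega
  · omega

theorem finite_decrements (hc : ColoredRecharge A w Ω) (hE : ∀ n, A.E (ρ n) (ρ (n + 1)))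
    (hre : ρ ∈ Recharge w cap) (h2 : {n | Ω (ρ n) = 2}.Finite) :
    {n | Ω (ρ n) = 1}.Finite := by
  obtain ⟨N, hN⟩ := h2.bddAbove
  have hno2 : ∀ n, N ≤ n → Ω (ρ (n + 1)) ≠ 2 := fun n hn h => by
    have := hN h
    omega
  have hanti : AntitoneOn (ELcap w cap ρ) (Set.Ici N) := by
    intro m hm n hn hmn
    induction n, hmn using Nat.le_induction with
    | base => exact le_rfl
    | succ n hmn ih =>
      exact (hc.ELcap_succ_le (hE n) (hno2 n (hm.trans hmn))).trans (ih (hm.trans hmn))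
  have hdesc := finite_setOf_lt_of_antitoneOn hanti hre
  refine ((Set.finite_Iic N).union (hdesc.image (· + 1))).subset fun n hn => ?_
  rcases Nat.lt_or_ge N n with hNn | hnN
  · obtain ⟨m, rfl⟩ : ∃ m, n = m + 1 := ⟨n - 1, by omega⟩
    exact Or.inr ⟨m, ⟨by omega, hc.ELcap_succ_lt (hE m) hn⟩, rfl⟩
  · exact Or.inl hnN

theorem mem_parityObj_of_mem_recharge (hc : ColoredRecharge A w Ω)
    (hE : ∀ n, A.E (ρ n) (ρ (n + 1))) (hre : ρ ∈ Recharge w cap) : ρ ∈ ParityObj Ω := by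
  have habove : ∀ d, 2 < d → {n | Ω (ρ n) = d}.Finite := fun d hd =>
    Set.finite_empty.subset fun n hn => by
      have := hc.color_le_two (ρ n)
      simp only [Set.mem_ofPred_eq] at hn
      omega
  by_cases h2 : {n | Ω (ρ n) = 2}.Infinite
  · exact mem_parityObj_of_infinite even_two h2 habove
  rw [Set.not_infinite] at h2
  have h1 := hc.finite_decrements hE hre h2
  have h0 : {n | Ω (ρ n) = 0}.Infinite :=
    (h1.union h2).infinite_compl.mono fun n hn => by
      have := hc.color_le_two (ρ n)
      simp only [Set.mem_compl_iff, Set.mem_union, Set.mem_ofPred_eq, not_or] at hn ⊢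
      omega
  refine mem_parityObj_of_infinite Even.zero h0 fun d hd => ?_
  rcases (by omega : d = 1 ∨ d = 2 ∨ 2 < d) with rfl | rfl | hd
  exacts [h1, h2, habove d hd]

end ColoredRecharge

theorem recharge_to_parity_general {V : Type} (A : Arena V)
    (w : V → V → Option ℤ) (Ω : V → ℕ)
    (hc : ColoredRecharge A w Ω) (cap : ℕ) (σ : List V → V)
    (hwin : A.WinningStrategy A.V0 (Recharge w cap) σ) :
    A.WinningStrategy A.V0 (ParityObj Ω) σ :=
  ⟨hwin.1, fun ρ hρ hcons => hc.mem_parityObj_of_mem_recharge hρ.2 (hwin.2 ρ hρ hcons)⟩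

/-- A winning strategy for Player 0 in the recharge game (for any
capacity) is also a winning strategy in the three-color parity game. -/
theorem recharge_to_parity {V : Type} [Fintype V] (A : Arena V)
    (w : V → V → Option ℤ) (Ω : V → ℕ)
    (hc : ColoredRecharge A w Ω) (cap : ℕ) (σ : List V → V)
    (hwin : A.WinningStrategy A.V0 (Recharge w cap) σ) :
    A.WinningStrategy A.V0 (ParityObj Ω) σ :=
  recharge_to_parity_general A w Ω hc cap σ hwin
end
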